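/- arXiv:2310.11825 — 3 statements merged into one kernel-verified Lean document; each statement's English description precedes it below -/
import Mathlib

section
/- Let G = (X, E, δ, X₀) be an NFA with observable events E_o, secret states X_S, natural projection P, and observer G_obs, and fix K ≥ 0. Construct the state-trees rooted at every observer state q ∈ X_obs with q ∩ X_S ≠ ∅, and let X_st be the set of all nodes occurring in these state-trees. Then G is K-step weak opaque if and only if every node (x₁, x₂) ∈ X_st satisfies x₂ ≠ ∅. -/
namespace Opacity

variable {X E : Type*}

/-- Extension of a nondeterministic transition function `δ : X × E → Set X`
to strings: `dStr δ x ε = {x}` and `dStr δ x (e·s) = ⋃ x' ∈ δ x e, dStr δ x' s`. -/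
def dStr (δ : X → E → Set X) : X → List E → Set X
  | x, [] => {x}
  | x, e :: s => ⋃ x' ∈ δ x e, dStr δ x' s

/-- Extension of the transition function to sets of states. -/
def dSet (δ : X → E → Set X) (Q : Set X) (s : List E) : Set X :=
  ⋃ x ∈ Q, dStr δ x s

/-- The natural projection `P : E* → E_o*`, deleting all unobservable events. -/
noncomputable def proj (Eo : Set E) : List E → List E
  | [] => []
  | e :: s => @ite _ (e ∈ Eo) (Classical.propDecidable _) (e :: proj Eo s) (proj Eo s)

/-- Unobservable reach `UR(Q)`. -/
def UR (δ : X → E → Set X) (Eo : Set E) (Q : Set X) : Set X :=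
  {x' | ∃ x ∈ Q, ∃ s : List E, x' ∈ dStr δ x s ∧ proj Eo s = []}

/-- Observable reach `R(Q, e_o)` via one observable event. -/
def oR (δ : X → E → Set X) (Eo : Set E) (Q : Set X) (eo : E) : Set X :=
  {x | ∃ x' ∈ Q, ∃ s : List E, x ∈ dStr δ x' s ∧ proj Eo s = [eo]}

/-- The observer's transition function `f_obs(q, e_o) = R(q, e_o)`, extended to
observation sequences.  It is totalized: since `R(∅, e_o) = ∅`, the partial
function `f_obs` is defined on `(q, w)` exactly when `fobs δ Eo q w` is nonempty. -/
def fobs (δ : X → E → Set X) (Eo : Set E) : Set X → List E → Set X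
  | q, [] => q
  | q, e :: w => fobs δ Eo (oR δ Eo q e) w

/-- The state set `X_obs` of the observer: the (nonempty) subsets of `X`
reachable from the initial observer state `UR(X₀)`. -/
def Xobs (δ : X → E → Set X) (Eo : Set E) (X0 : Set X) : Set (Set X) :=
  {q | ∃ w : List E, fobs δ Eo (UR δ Eo X0) w = q ∧ q.Nonempty}

/-- `y` is a run of the automaton from `x` over the string `s`:
`y 0 = x` and `y (j+1) ∈ δ (y j) (s[j])` for all `j < |s|`. -/
def IsRun (δ : X → E → Set X) (x : X) (s : List E) (y : ℕ → X) : Prop :=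
  y 0 = x ∧ ∀ j : Fin s.length, y (j.val + 1) ∈ δ (y j.val) (s.get j)

/-- There is a non-secret run of the automaton from `x` to `x'` over `s`
(all states of the run except possibly the first one are non-secret). -/
def NonSecretRunTo (δ : X → E → Set X) (XS : Set X) (x : X) (s : List E) (x' : X) : Prop :=
  ∃ y : ℕ → X, IsRun δ x s y ∧ (∀ j, 1 ≤ j → j ≤ s.length → y j ∉ XS) ∧ y s.length = x'

/-- `K`-step weak opacity. -/
def KStepWeakOpaque (δ : X → E → Set X) (Eo : Set E) (X0 XS : Set X) (K : ℕ) : Prop :=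
  ∀ x0 ∈ X0, ∀ s t : List E,
    (dStr δ x0 (s ++ t)).Nonempty →
    (dStr δ x0 s ∩ XS).Nonempty →
    (dSet δ (dStr δ x0 s ∩ XS) t).Nonempty →
    (proj Eo t).length ≤ K →
    ∃ x0' ∈ X0, ∃ s' t' : List E,
      (dStr δ x0' (s' ++ t')).Nonempty ∧
      proj Eo s' = proj Eo s ∧ proj Eo t' = proj Eo t ∧
      (dStr δ x0' s' ∩ XSᶜ).Nonempty ∧
      (dSet δ (dStr δ x0' s' ∩ XSᶜ) t').Nonempty

/-- Infinite-step weak opacity. -/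
def InfStepWeakOpaque (δ : X → E → Set X) (Eo : Set E) (X0 XS : Set X) : Prop :=
  ∀ x0 ∈ X0, ∀ s t : List E,
    (dStr δ x0 (s ++ t)).Nonempty →
    (dStr δ x0 s ∩ XS).Nonempty →
    (dSet δ (dStr δ x0 s ∩ XS) t).Nonempty →
    ∃ x0' ∈ X0, ∃ s' t' : List E,
      (dStr δ x0' (s' ++ t')).Nonempty ∧
      proj Eo s' = proj Eo s ∧ proj Eo t' = proj Eo t ∧
      (dStr δ x0' s' ∩ XSᶜ).Nonempty ∧
      (dSet δ (dStr δ x0' s' ∩ XSᶜ) t').Nonempty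

/-- `K`-step strong opacity. -/
def KStepStrongOpaque (δ : X → E → Set X) (Eo : Set E) (X0 XS : Set X) (K : ℕ) : Prop :=
  ∀ x0 ∈ X0, ∀ s t : List E,
    (dStr δ x0 (s ++ t)).Nonempty →
    (dStr δ x0 s ∩ XS).Nonempty →
    (dSet δ (dStr δ x0 s ∩ XS) t).Nonempty →
    (proj Eo t).length ≤ K →
    ∃ x0' ∈ X0, ∃ ω : List E,
      (dStr δ x0' ω).Nonempty ∧
      proj Eo ω = proj Eo (s ++ t) ∧
      ∃ y : ℕ → X, IsRun δ x0' ω y ∧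
        ∀ j ≤ ω.length,
          (proj Eo ω).length - (proj Eo (ω.take j)).length ≤ K → y j ∉ XS

/-- Infinite-step strong opacity. -/
def InfStepStrongOpaque (δ : X → E → Set X) (Eo : Set E) (X0 XS : Set X) : Prop :=
  ∀ x0 ∈ X0, ∀ s t : List E,
    (dStr δ x0 (s ++ t)).Nonempty →
    (dStr δ x0 s ∩ XS).Nonempty →
    (dSet δ (dStr δ x0 s ∩ XS) t).Nonempty →
    ∃ x0' ∈ X0 ∩ XSᶜ, ∃ ω : List E,
      (dStr δ x0' ω).Nonempty ∧
      proj Eo ω = proj Eo (s ++ t) ∧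
      ∃ y : ℕ → X, IsRun δ x0' ω y ∧ ∀ j ≤ ω.length, y j ∉ XS

/-- Child of a node `(x₁, x₂)` of a state-tree associated with observer state `q'`,
via observable event `e`. -/
def treeChild (δ : X → E → Set X) (Eo : Set E) (q' : Set X) (n : Set X × Set X)
    (e : E) : Set X × Set X :=
  ({x ∈ oR δ Eo q' e | ∃ x' ∈ n.1, x ∈ oR δ Eo {x'} e},
   {x ∈ oR δ Eo q' e | ∃ x' ∈ n.2, x ∈ oR δ Eo {x'} e})

/-- Descend in a state-tree from node `n` (associated with observer state `q'`)
along the observation sequence `w`. -/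
def treeNodeAux (δ : X → E → Set X) (Eo : Set E) :
    Set X → Set X × Set X → List E → Set X × Set X
  | _, n, [] => n
  | q', n, e :: w => treeNodeAux δ Eo (oR δ Eo q' e) (treeChild δ Eo q' n e) w

/-- The node of the state-tree rooted at observer state `q` reached from the
root `(q ∩ X_S, q ∩ X_NS)` along the observation sequence `w`. -/
def treeNode (δ : X → E → Set X) (Eo : Set E) (XS : Set X) (q : Set X)
    (w : List E) : Set X × Set X :=
  treeNodeAux δ Eo q (q ∩ XS, q ∩ XSᶜ) w

/-- `X_st`: all nodes of the depth-`K` state-trees rooted at observer states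
intersecting the secret states. -/
def Xst (δ : X → E → Set X) (Eo : Set E) (X0 XS : Set X) (K : ℕ) :
    Set (Set X × Set X) :=
  {n | ∃ q ∈ Xobs δ Eo X0, (q ∩ XS).Nonempty ∧
    ∃ w : List E, w.length ≤ K ∧ (fobs δ Eo q w).Nonempty ∧ treeNode δ Eo XS q w = n}

/-- Initial states of the secret-involved projected automaton.  A state of
`G_SP` is a pair `(x, b)` where `b = false` encodes the tag `N` and `b = true`
encodes the tag `Y`. -/
def SPinit (δ : X → E → Set X) (Eo : Set E) (X0 XS : Set X) : Set (X × Bool) :=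
  {p | p.1 ∈ UR δ Eo X0 ∧
    (p.2 = false ↔
      ∃ x0 ∈ X0 ∩ XSᶜ, ∃ s : List E, proj Eo s = [] ∧ NonSecretRunTo δ XS x0 s p.1)}

/-- Transition relation of the secret-involved projected automaton. -/
def SPtrans (δ : X → E → Set X) (Eo : Set E) (XS : Set X) (p : X × Bool) (e : E) :
    Set (X × Bool) :=
  {p' | p'.1 ∈ oR δ Eo {p.1} e ∧
    ((p.1 ∉ XS ∧
        (p'.2 = false ↔ ∃ s : List E, proj Eo s = [e] ∧ NonSecretRunTo δ XS p.1 s p'.1)) ∨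
     (p.1 ∈ XS ∧ p.2 = true ∧ p'.2 = true))}

/-- `X_SP`: states of the secret-involved projected automaton reachable from
its initial states. -/
def XSP (δ : X → E → Set X) (Eo : Set E) (X0 XS : Set X) : Set (X × Bool) :=
  {p | ∃ p0 ∈ SPinit δ Eo X0 XS, ∃ w : List E, p ∈ dStr (SPtrans δ Eo XS) p0 w}

/-- Child of a node `(x₁, x₂)` of a secret-unvisited state-tree associated with
observer state `q'`, via observable event `e`. -/
def sstChild (δ : X → E → Set X) (Eo : Set E) (XS : Set X) (q' : Set X)
    (n : Set X × Set X) (e : E) : Set X × Set X :=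
  (oR δ Eo q' e,
   {x ∈ oR δ Eo q' e | ∃ x' ∈ n.2,
      x ∈ oR δ Eo {x'} e ∧ (x, false) ∈ SPtrans δ Eo XS (x', false) e})

/-- Descend in a secret-unvisited state-tree from node `n` (associated with
observer state `q'`) along the observation sequence `w`. -/
def sstNodeAux (δ : X → E → Set X) (Eo : Set E) (XS : Set X) :
    Set X → Set X × Set X → List E → Set X × Set X
  | _, n, [] => n
  | q', n, e :: w => sstNodeAux δ Eo XS (oR δ Eo q' e) (sstChild δ Eo XS q' n e) w

/-- The node of the secret-unvisited state-tree (SST) rooted at observer state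
`q` reached from the root `(q, {x ∈ q ∩ X_NS : x_N ∈ X_SP})` along the
observation sequence `w`. -/
def sstNode (δ : X → E → Set X) (Eo : Set E) (X0 XS : Set X) (q : Set X)
    (w : List E) : Set X × Set X :=
  sstNodeAux δ Eo XS q
    (q, {x | x ∈ q ∧ x ∉ XS ∧ (x, false) ∈ XSP δ Eo X0 XS}) w

/-- `X_st^G`: all nodes of the depth-`K` SSTs rooted at observer states
intersecting the secret states. -/
def XstSST (δ : X → E → Set X) (Eo : Set E) (X0 XS : Set X) (K : ℕ) :
    Set (Set X × Set X) :=
  {n | ∃ q ∈ Xobs δ Eo X0, (q ∩ XS).Nonempty ∧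
    ∃ w : List E, w.length ≤ K ∧ (fobs δ Eo q w).Nonempty ∧ sstNode δ Eo X0 XS q w = n}

/-- Initial state of the verifier. -/
def vInit (δ : X → E → Set X) (Eo : Set E) (X0 XS : Set X) : Set X × Set X :=
  (UR δ Eo X0, {x ∈ UR δ Eo X0 | (x, false) ∈ SPinit δ Eo X0 XS})

/-- Transition function of the verifier, extended to observation sequences
(totalized: the verifier step is defined exactly when the corresponding
observer step is, i.e. exactly when the first component stays nonempty). -/
def fv (δ : X → E → Set X) (Eo : Set E) (XS : Set X) :
    Set X × Set X → List E → Set X × Set X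
  | v, [] => v
  | v, e :: w => fv δ Eo XS
      (oR δ Eo v.1 e,
       {x' ∈ oR δ Eo v.1 e | ∃ x ∈ v.2, (x', false) ∈ SPtrans δ Eo XS (x, false) e}) w

/-- `X_v`: the verifier states reachable from the initial verifier state. -/
def Xv (δ : X → E → Set X) (Eo : Set E) (X0 XS : Set X) : Set (Set X × Set X) :=
  {v | ∃ w : List E, fv δ Eo XS (vInit δ Eo X0 XS) w = v ∧ v.1.Nonempty}

end Opacity

namespace OpacityProof
open Opacity

variable {X E : Type*}

lemma proj_append (Eo : Set E) (s t : List E) :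
    proj Eo (s ++ t) = proj Eo s ++ proj Eo t := by
  induction s with
  | nil => simp [proj]
  | cons a s ih => by_cases h : a ∈ Eo <;> simp [proj, h, ih]

lemma mem_dStr_append (δ : X → E → Set X) (s t : List E) (x x'' : X) :
    x'' ∈ dStr δ x (s ++ t) ↔ ∃ x' ∈ dStr δ x s, x'' ∈ dStr δ x' t := by
  induction s generalizing x with
  | nil => simp [dStr]
  | cons e s ih => simp only [List.cons_append, dStr, Set.mem_iUnion]; aesop

lemma proj_split (Eo : Set E) :
    ∀ (t w1 w2 : List E), proj Eo t = w1 ++ w2 →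
      ∃ t1 t2, t = t1 ++ t2 ∧ proj Eo t1 = w1 ∧ proj Eo t2 = w2 := by
  intro t
  induction t with
  | nil =>
    intro w1 w2 h
    simp only [proj] at h
    rcases List.append_eq_nil_iff.mp h.symm with ⟨h1, h2⟩
    exact ⟨[], [], by simp [proj, h1, h2]⟩
  | cons a t ih =>
    intro w1 w2 h
    by_cases ha : a ∈ Eo
    · simp only [proj, if_pos ha] at h
      cases w1 with
      | nil =>
        refine ⟨[], a :: t, by simp, by simp [proj], ?_⟩
        simpa [proj, if_pos ha] using h
      | cons b w1 =>
        simp only [List.cons_append, List.cons.injEq] at h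
        obtain ⟨t1, t2, rfl, h1, h2⟩ := ih w1 w2 h.2
        exact ⟨a :: t1, t2, by simp [proj, if_pos ha, h1, h2, h.1]⟩
    · simp only [proj, if_neg ha] at h
      obtain ⟨t1, t2, rfl, h1, h2⟩ := ih w1 w2 h
      exact ⟨a :: t1, t2, by simp [proj, if_neg ha, h1, h2]⟩

lemma mem_dSet {δ : X → E → Set X} {Q : Set X} {t : List E} {x' : X} :
    x' ∈ dSet δ Q t ↔ ∃ x ∈ Q, x' ∈ dStr δ x t := by simp [dSet]

/-- Semantic reach set. -/
def reach (δ : X → E → Set X) (Eo : Set E) (Q : Set X) (w : List E) : Set X :=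
  {x | ∃ x' ∈ Q, ∃ t : List E, x ∈ dStr δ x' t ∧ proj Eo t = w}

lemma oR_eq (δ : X → E → Set X) (Eo : Set E) (Q : Set X) (e : E) :
    oR δ Eo Q e = reach δ Eo Q [e] := rfl

lemma UR_eq (δ : X → E → Set X) (Eo : Set E) (Q : Set X) :
    UR δ Eo Q = reach δ Eo Q [] := rfl

lemma reach_append (δ : X → E → Set X) (Eo : Set E) (Q : Set X) (w1 w2 : List E) :
    reach δ Eo (reach δ Eo Q w1) w2 = reach δ Eo Q (w1 ++ w2) := by
  ext x
  constructor
  · rintro ⟨x', ⟨x0, hx0, t1, ht1, hp1⟩, t2, ht2, hp2⟩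
    exact ⟨x0, hx0, t1 ++ t2, (mem_dStr_append δ t1 t2 x0 x).mpr ⟨x', ht1, ht2⟩,
      by rw [proj_append, hp1, hp2]⟩
  · rintro ⟨x0, hx0, t, ht, hp⟩
    obtain ⟨t1, t2, rfl, h1, h2⟩ := proj_split Eo t w1 w2 hp
    obtain ⟨x', hx'1, hx'2⟩ := (mem_dStr_append δ t1 t2 x0 x).mp ht
    exact ⟨x', ⟨x0, hx0, t1, hx'1, h1⟩, t2, hx'2, h2⟩

lemma subset_reach_nil (δ : X → E → Set X) (Eo : Set E) (Q : Set X) :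
    Q ⊆ reach δ Eo Q [] := fun x hx => ⟨x, hx, [], by simp [dStr, proj]⟩

lemma fobs_closed (δ : X → E → Set X) (Eo : Set E) :
    ∀ (w : List E) (Q : Set X), reach δ Eo Q [] = Q →
      fobs δ Eo Q w = reach δ Eo Q w := by
  intro w
  induction w with
  | nil => intro Q hQ; exact hQ.symm
  | cons e w ih =>
    intro Q hQ
    have hcl : reach δ Eo (oR δ Eo Q e) [] = oR δ Eo Q e := by
      rw [oR_eq, reach_append]; rfl
    have : fobs δ Eo Q (e :: w) = fobs δ Eo (oR δ Eo Q e) w := rfl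
    rw [this, ih _ hcl, oR_eq, reach_append]; rfl

lemma fobs_cons (δ : X → E → Set X) (Eo : Set E) (Q : Set X) (e : E) (w : List E) :
    fobs δ Eo Q (e :: w) = reach δ Eo Q (e :: w) := by
  have hcl : reach δ Eo (oR δ Eo Q e) [] = oR δ Eo Q e := by
    rw [oR_eq, reach_append]; rfl
  have : fobs δ Eo Q (e :: w) = fobs δ Eo (oR δ Eo Q e) w := rfl
  rw [this, fobs_closed δ Eo w _ hcl, oR_eq, reach_append]; rfl

lemma fobs_UR (δ : X → E → Set X) (Eo : Set E) (X0 : Set X) (w : List E) :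
    fobs δ Eo (UR δ Eo X0) w = reach δ Eo X0 w := by
  rw [UR_eq, fobs_closed δ Eo w _ (by rw [reach_append]; rfl), reach_append]
  rfl

lemma oR_mono {δ : X → E → Set X} {Eo : Set E} {Q Q' : Set X} (h : Q ⊆ Q') (e : E) :
    oR δ Eo Q e ⊆ oR δ Eo Q' e := by
  rintro x ⟨x', hx', s, hs⟩; exact ⟨x', h hx', s, hs⟩

lemma treeChild_eq (δ : X → E → Set X) (Eo : Set E) {q' x1 x2 : Set X}
    (h1 : x1 ⊆ q') (h2 : x2 ⊆ q') (e : E) :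
    treeChild δ Eo q' (x1, x2) e = (oR δ Eo x1 e, oR δ Eo x2 e) := by
  have key : ∀ x' : Set X, x' ⊆ q' →
      {x ∈ oR δ Eo q' e | ∃ y ∈ x', x ∈ oR δ Eo {y} e} = oR δ Eo x' e := by
    intro x' hx'
    ext x
    constructor
    · rintro ⟨-, y, hy, z, hz, s, hs⟩
      cases hz; exact ⟨y, hy, s, hs⟩
    · rintro ⟨y, hy, s, hs⟩
      exact ⟨⟨y, hx' hy, s, hs⟩, y, hy, y, rfl, s, hs⟩
  simp only [treeChild]
  exact Prod.ext (key x1 h1) (key x2 h2)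

lemma treeNodeAux_eq (δ : X → E → Set X) (Eo : Set E) :
    ∀ (w : List E) (q' x1 x2 : Set X), x1 ⊆ q' → x2 ⊆ q' →
      treeNodeAux δ Eo q' (x1, x2) w = (fobs δ Eo x1 w, fobs δ Eo x2 w) := by
  intro w
  induction w with
  | nil => intro q' x1 x2 _ _; rfl
  | cons e w ih =>
    intro q' x1 x2 h1 h2
    have : treeNodeAux δ Eo q' (x1, x2) (e :: w)
        = treeNodeAux δ Eo (oR δ Eo q' e) (treeChild δ Eo q' (x1, x2) e) w := rfl
    rw [this, treeChild_eq δ Eo h1 h2 e,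
      ih (oR δ Eo q' e) _ _ (oR_mono h1 e) (oR_mono h2 e)]
    rfl

lemma treeNode_eq (δ : X → E → Set X) (Eo : Set E) (XS q : Set X) (w : List E) :
    treeNode δ Eo XS q w = (fobs δ Eo (q ∩ XS) w, fobs δ Eo (q ∩ XSᶜ) w) :=
  treeNodeAux_eq δ Eo w q _ _ Set.inter_subset_left Set.inter_subset_left

end OpacityProof

open OpacityProof
open Opacity

/-- An NFA `G` is `K`-step weak opaque if and only if every node
`(x₁, x₂)` occurring in the state-trees rooted at the observer states that
intersect the secret states satisfies `x₂ ≠ ∅`. -/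
theorem kStepWeakOpaque_iff_stateTree_nodes_nonempty
    {X E : Type*} [Finite X] [Finite E]
    (δ : X → E → Set X) (Eo : Set E) (X0 XS : Set X) (K : ℕ) :
    KStepWeakOpaque δ Eo X0 XS K ↔
      ∀ n ∈ Xst δ Eo X0 XS K, n.2 ≠ ∅ := by
  constructor
  · -- opacity → all nodes have nonempty second component
    intro hop n hn
    obtain ⟨q, ⟨w0, hq, hqne⟩, ⟨xs0, hxs0⟩, w, hwK, ⟨xe, hxe⟩, htn⟩ := hn
    have hqr : reach δ Eo X0 w0 = q := (fobs_UR δ Eo X0 w0).symm.trans hq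
    subst htn
    rw [treeNode_eq]
    show fobs δ Eo (q ∩ XSᶜ) w ≠ ∅
    rw [← Set.nonempty_iff_ne_empty]
    cases w with
    | nil =>
      show (q ∩ XSᶜ).Nonempty
      obtain ⟨x0, hx0, s, hds, hps⟩ : xs0 ∈ reach δ Eo X0 w0 := hqr ▸ hxs0.1
      obtain ⟨x0', hx0', s', t', hne', hps', hpt', ⟨xn, hxn⟩, -⟩ :=
        hop x0 hx0 s []
          (by rw [List.append_nil]; exact ⟨xs0, hds⟩)
          ⟨xs0, hds, hxs0.2⟩
          ⟨xs0, mem_dSet.mpr ⟨xs0, ⟨hds, hxs0.2⟩, by simp [dStr]⟩⟩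
          (by simp [proj])
      refine ⟨xn, ?_, hxn.2⟩
      rw [← hqr]
      exact ⟨x0', hx0', s', hxn.1, hps'.trans hps⟩
    | cons e w =>
      rw [fobs_cons] at hxe ⊢
      obtain ⟨x', hx'q, t, hdt, hpt⟩ := hxe
      by_cases hx'S : x' ∈ XS
      · obtain ⟨x0, hx0, s, hds, hps⟩ : x' ∈ reach δ Eo X0 w0 := hqr ▸ hx'q
        obtain ⟨x0', hx0', s', t', hne', hps', hpt', -, ⟨xf, hxf⟩⟩ :=
          hop x0 hx0 s t
            ⟨xe, (mem_dStr_append δ s t x0 xe).mpr ⟨x', hds, hdt⟩⟩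
            ⟨x', hds, hx'S⟩
            ⟨xe, mem_dSet.mpr ⟨x', ⟨hds, hx'S⟩, hdt⟩⟩
            (by rw [hpt]; exact hwK)
        obtain ⟨xn, ⟨hxn1, hxn2⟩, hdxf⟩ := mem_dSet.mp hxf
        have hxnq : xn ∈ q := by
          rw [← hqr]; exact ⟨x0', hx0', s', hxn1, hps'.trans hps⟩
        exact ⟨xf, xn, ⟨hxnq, hxn2⟩, t', hdxf, hpt'.trans hpt⟩
      · exact ⟨xe, x', ⟨hx'q, hx'S⟩, t, hdt, hpt⟩
  · -- all nodes nonempty → opacity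
    intro H x0 hx0 s t hst hsS htS hK
    obtain ⟨xs, hxs_d, hxs_S⟩ := hsS
    obtain ⟨xf, hxf⟩ := htS
    obtain ⟨x1, ⟨hx1d, hx1S⟩, hxf⟩ := mem_dSet.mp hxf
    have hxsq : xs ∈ reach δ Eo X0 (proj Eo s) := ⟨x0, hx0, s, hxs_d, rfl⟩
    have hx1q : x1 ∈ reach δ Eo X0 (proj Eo s) := ⟨x0, hx0, s, hx1d, rfl⟩
    set q := reach δ Eo X0 (proj Eo s) with hqdef
    have hqObs : q ∈ Xobs δ Eo X0 := ⟨proj Eo s, fobs_UR δ Eo X0 (proj Eo s), ⟨xs, hxsq⟩⟩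
    have hfne : (fobs δ Eo q (proj Eo t)).Nonempty := by
      cases hpt : proj Eo t with
      | nil => exact ⟨xs, hxsq⟩
      | cons e w => rw [fobs_cons]; exact ⟨xf, x1, hx1q, t, hxf, hpt⟩
    have hnode := H (treeNode δ Eo XS q (proj Eo t))
      ⟨q, hqObs, ⟨xs, hxsq, hxs_S⟩, proj Eo t, hK, hfne, rfl⟩
    rw [treeNode_eq] at hnode
    replace hnode : (fobs δ Eo (q ∩ XSᶜ) (proj Eo t)).Nonempty :=
      Set.nonempty_iff_ne_empty.mpr hnode
    cases hpt : proj Eo t with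
    | nil =>
      rw [hpt] at hnode
      obtain ⟨xn, hxnq, hxnS⟩ := hnode
      obtain ⟨x0', hx0', s', hd', hp'⟩ := hxnq
      refine ⟨x0', hx0', s', [], ?_, hp', by simp [proj, hpt], ⟨xn, hd', hxnS⟩, ?_⟩
      · rw [List.append_nil]; exact ⟨xn, hd'⟩
      · exact ⟨xn, mem_dSet.mpr ⟨xn, ⟨hd', hxnS⟩, by simp [dStr]⟩⟩
    | cons e w =>
      rw [hpt, fobs_cons] at hnode
      obtain ⟨xf', xn, ⟨hxnq, hxnS⟩, t', hdt', hpt'⟩ := hnode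
      obtain ⟨x0', hx0', s', hd', hp'⟩ := hxnq
      refine ⟨x0', hx0', s', t', ?_, hp', hpt', ⟨xn, hd', hxnS⟩, ?_⟩
      · exact ⟨xf', (mem_dStr_append δ s' t' x0' xf').mpr ⟨xn, hd', hdt'⟩⟩
      · exact ⟨xf', mem_dSet.mpr ⟨xn, ⟨hd', hxnS⟩, hdt'⟩⟩
end

section
/- Let G = (X, E, δ, X₀) be an NFA with observable events E_o, secret states X_S, observer G_obs and secret-involved projected automaton G_SP, and fix K ≥ 0. Let G_st be the SST rooted at an observer state q ∈ X_obs with q ∩ X_S ≠ ∅, with root x_st,0 = (x_st,0¹, x_st,0²), and let p = x_st,0 x_st,1 ⋯ x_st,n (0 ≤ n ≤ K) be a path in G_st whose corresponding sequence of observations is e_{o,1} e_{o,2} ⋯ e_{o,n}. If x_st,i² ≠ ∅ for all 0 ≤ i ≤ n, then for every 0 ≤ i ≤ n and every x_i ∈ x_st,i² there exist x₀ ∈ X_NS ∩ x_st,0² and a string s = s₁s₂⋯s_i ∈ E* with P(s_j) = e_{o,j} for all 1 ≤ j ≤ i such that there is a non-secret run of G from x₀ to x_i over s. -/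
/-! An `N`-tagged state in the second component of an SST node is, by the definition of `G_SP`,
reached from an `N`-tagged state of its parent's second component by a non-secret run observed
as the edge label. Concatenating these runs back to the root gives the required run. -/

namespace Opacity

variable {X E : Type*}

theorem proj_append (Eo : Set E) (s t : List E) :
    proj Eo (s ++ t) = proj Eo s ++ proj Eo t := by
  induction s with
  | nil => rfl
  | cons e s ih =>
    simp only [List.cons_append, proj, ih]
    split <;> rfl

section NonSecretRun

variable {δ : X → E → Set X} {XS : Set X}

theorem nonSecretRunTo_nil {x x' : X} : NonSecretRunTo δ XS x [] x' ↔ x = x' := by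
  constructor
  · rintro ⟨y, ⟨hy0, -⟩, -, hyx'⟩
    exact hy0.symm.trans hyx'
  · rintro rfl
    exact ⟨fun _ => x, ⟨rfl, fun j => j.elim0⟩, fun j _ hj => by simp at hj; omega, rfl⟩

theorem nonSecretRunTo_cons {x x'' : X} {e : E} {s : List E} :
    NonSecretRunTo δ XS x (e :: s) x'' ↔
      ∃ x' ∈ δ x e, x' ∉ XS ∧ NonSecretRunTo δ XS x' s x'' := by
  constructor
  · rintro ⟨y, ⟨hy0, hstep⟩, hns, hend⟩
    refine ⟨y 1, hy0 ▸ hstep ⟨0, by simp⟩, hns 1 le_rfl (by simp),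
      fun j => y (j + 1), ⟨rfl, fun j => hstep j.succ⟩,
      fun j _ hj => hns (j + 1) (by omega) (by simpa using hj), hend⟩
  · rintro ⟨x', hx', hx'S, y, ⟨hy0, hstep⟩, hns, hend⟩
    let z : ℕ → X := fun | 0 => x | j + 1 => y j
    refine ⟨z, ⟨rfl, Fin.cases (show y 0 ∈ δ x e from hy0 ▸ hx') hstep⟩, ?_, hend⟩
    rintro (_ | _ | j) h1 h2
    · omega
    · show y 0 ∉ XS
      exact hy0 ▸ hx'S
    · exact hns (j + 1) (by omega) (by simpa using h2)

theorem NonSecretRunTo.append {x x' x'' : X} {s t : List E}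
    (h₁ : NonSecretRunTo δ XS x s x') (h₂ : NonSecretRunTo δ XS x' t x'') :
    NonSecretRunTo δ XS x (s ++ t) x'' := by
  induction s generalizing x with
  | nil => rwa [List.nil_append, nonSecretRunTo_nil.1 h₁]
  | cons e s ih =>
    obtain ⟨y, hy, hyS, hrun⟩ := nonSecretRunTo_cons.1 h₁
    exact nonSecretRunTo_cons.2 ⟨y, hy, hyS, ih hrun⟩

end NonSecretRun

section SST

variable {δ : X → E → Set X} {Eo : Set E} {XS : Set X}

theorem exists_nonSecretRunTo_of_mem_sstChild {q' : Set X} {n : Set X × Set X} {e : E}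
    {x : X} (hx : x ∈ (sstChild δ Eo XS q' n e).2) :
    ∃ x' ∈ n.2, ∃ s, proj Eo s = [e] ∧ NonSecretRunTo δ XS x' s x := by
  obtain ⟨-, x', hx', -, -, ⟨-, hN⟩ | ⟨-, hY, -⟩⟩ := hx
  · exact ⟨x', hx', hN.1 rfl⟩
  · exact absurd hY Bool.false_ne_true

theorem exists_nonSecretRunTo_of_mem_sstNodeAux (w : List E) {q' : Set X}
    {n : Set X × Set X} {x : X} (hx : x ∈ (sstNodeAux δ Eo XS q' n w).2) :
    ∃ x₀ ∈ n.2, ∃ s, proj Eo s = w ∧ NonSecretRunTo δ XS x₀ s x := by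
  induction w generalizing q' n with
  | nil => exact ⟨x, hx, [], rfl, nonSecretRunTo_nil.2 rfl⟩
  | cons e w ih =>
    obtain ⟨x₁, hx₁, s, hs, hrun⟩ := ih hx
    obtain ⟨x₀, hx₀, s₀, hs₀, hrun₀⟩ := exists_nonSecretRunTo_of_mem_sstChild hx₁
    exact ⟨x₀, hx₀, s₀ ++ s, by rw [proj_append, hs₀, hs]; rfl, hrun₀.append hrun⟩

end SST

end Opacity

open Opacity

theorem sst_second_component_nonsecret_runs_general
    {X E : Type*}
    (δ : X → E → Set X) (Eo : Set E) (X0 XS : Set X)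
    (q : Set X)
    (w : List E) :
    ∀ i ≤ w.length, ∀ x ∈ (sstNode δ Eo X0 XS q (w.take i)).2,
      ∃ x0 ∈ XSᶜ ∩ (sstNode δ Eo X0 XS q ([] : List E)).2,
        ∃ s : List E, proj Eo s = w.take i ∧ NonSecretRunTo δ XS x0 s x := by
  intro i _ x hx
  obtain ⟨x0, hx0, s, hs, hrun⟩ := exists_nonSecretRunTo_of_mem_sstNodeAux _ hx
  exact ⟨x0, ⟨hx0.2.1, hx0⟩, s, hs, hrun⟩

/-- Along a path `x_st,0 ⋯ x_st,n` (with `n ≤ K`) of an SST rooted at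
an observer state `q` with `q ∩ X_S ≠ ∅`, if all second components are nonempty, then
every state in every second component is reached from some non-secret state of the
root's second component by a non-secret run whose projection is the corresponding
observation sequence. -/
theorem sst_second_component_nonsecret_runs
    {X E : Type*} [Finite X] [Finite E]
    (δ : X → E → Set X) (Eo : Set E) (X0 XS : Set X) (K : ℕ)
    (q : Set X) (hq : q ∈ Xobs δ Eo X0) (hqS : (q ∩ XS).Nonempty)
    (w : List E) (hwK : w.length ≤ K) (hdef : (fobs δ Eo q w).Nonempty)
    (hne : ∀ i ≤ w.length, (sstNode δ Eo X0 XS q (w.take i)).2 ≠ ∅) :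
    ∀ i ≤ w.length, ∀ x ∈ (sstNode δ Eo X0 XS q (w.take i)).2,
      ∃ x0 ∈ XSᶜ ∩ (sstNode δ Eo X0 XS q ([] : List E)).2,
        ∃ s : List E, proj Eo s = w.take i ∧ NonSecretRunTo δ XS x0 s x :=
  sst_second_component_nonsecret_runs_general δ Eo X0 XS q w
end

section
/- Let G = (X, E, δ, X₀) be an NFA with observable events E_o, natural projection P, and observer G_obs. For every observation sequence w ∈ E_o*: f_obs(x_obs,0, w) is defined if and only if there exist x₀ ∈ X₀ and s ∈ E* with P(s) = w and δ(x₀, s) ≠ ∅; and in that case f_obs(x_obs,0, w) = {x ∈ X : ∃ x₀ ∈ X₀, ∃ s ∈ E*, P(s) = w ∧ x ∈ δ(x₀, s)}. -/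
open Opacity

namespace ObsAux

variable {X E : Type*}

lemma proj_append (Eo : Set E) (u v : List E) :
    proj Eo (u ++ v) = proj Eo u ++ proj Eo v := by
  induction u with
  | nil => simp [proj]
  | cons a u ih => simp only [List.cons_append, proj]; split <;> simp [ih]

lemma mem_dStr_append (δ : X → E → Set X) (u v : List E) (x0 x : X) :
    x ∈ dStr δ x0 (u ++ v) ↔ ∃ x1 ∈ dStr δ x0 u, x ∈ dStr δ x1 v := by
  induction u generalizing x0 with
  | nil => simp [dStr]
  | cons a u ih =>
    simp only [List.cons_append, dStr, Set.mem_iUnion]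
    constructor
    · rintro ⟨x', hx', hmem⟩
      rcases (ih x').1 hmem with ⟨x1, h1, h2⟩
      exact ⟨x1, ⟨x', hx', h1⟩, h2⟩
    · rintro ⟨x1, ⟨x', hx', h1⟩, h2⟩
      exact ⟨x', hx', (ih x').2 ⟨x1, h1, h2⟩⟩

lemma proj_eq_cons (Eo : Set E) {s : List E} {e : E} {w : List E}
    (h : proj Eo s = e :: w) :
    ∃ u v : List E, s = u ++ v ∧ proj Eo u = [e] ∧ proj Eo v = w := by
  induction s with
  | nil => simp [proj] at h
  | cons a s ih =>
    simp only [proj] at h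
    split at h
    · rcases List.cons.injEq .. ▸ h with ⟨rfl, hw⟩
      exact ⟨[a], s, rfl, by simp [proj, ‹a ∈ Eo›], hw⟩
    · rcases ih h with ⟨u, v, rfl, hu, hv⟩
      exact ⟨a :: u, v, rfl, by simp [proj, ‹¬ a ∈ Eo›, hu], hv⟩

lemma UR_oR (δ : X → E → Set X) (Eo : Set E) (Q : Set X) (e : E) :
    UR δ Eo (oR δ Eo Q e) = oR δ Eo Q e := by
  ext x
  constructor
  · rintro ⟨x1, ⟨x', hx', s, hs, hps⟩, t, ht, hpt⟩
    refine ⟨x', hx', s ++ t, (mem_dStr_append δ s t x' x).2 ⟨x1, hs, ht⟩, ?_⟩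
    rw [proj_append, hps, hpt]; simp
  · intro hx
    exact ⟨x, hx, [], by simp [dStr], by simp [proj]⟩

lemma key (δ : X → E → Set X) (Eo : Set E) (Q : Set X) (hQ : UR δ Eo Q = Q)
    (w : List E) :
    fobs δ Eo Q w = {x | ∃ x' ∈ Q, ∃ s, proj Eo s = w ∧ x ∈ dStr δ x' s} := by
  induction w generalizing Q with
  | nil =>
    ext x
    constructor
    · intro hx
      have hx' : x ∈ UR δ Eo Q := by rw [hQ]; exact hx
      rcases hx' with ⟨x', hx', s, hs, hps⟩
      exact ⟨x', hx', s, hps, hs⟩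
    · rintro ⟨x', hx', s, hps, hs⟩
      have : x ∈ UR δ Eo Q := ⟨x', hx', s, hs, hps⟩
      rw [hQ] at this
      exact this
  | cons e w ih =>
    simp only [fobs]
    rw [ih _ (UR_oR δ Eo Q e)]
    ext x
    constructor
    · rintro ⟨x1, ⟨x', hx', s, hs, hps⟩, t, hpt, ht⟩
      refine ⟨x', hx', s ++ t, ?_, (mem_dStr_append δ s t x' x).2 ⟨x1, hs, ht⟩⟩
      rw [proj_append, hps, hpt]; rfl
    · rintro ⟨x', hx', s, hps, hs⟩
      rcases proj_eq_cons Eo hps with ⟨u, v, rfl, hu, hv⟩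
      rcases (mem_dStr_append δ u v x' x).1 hs with ⟨x1, h1, h2⟩
      exact ⟨x1, ⟨x', hx', u, h1, hu⟩, v, hv, h2⟩

lemma UR_UR (δ : X → E → Set X) (Eo : Set E) (X0 : Set X) :
    UR δ Eo (UR δ Eo X0) = UR δ Eo X0 := by
  ext x
  constructor
  · rintro ⟨x1, ⟨x0, hx0, s, hs, hps⟩, t, ht, hpt⟩
    refine ⟨x0, hx0, s ++ t, (mem_dStr_append δ s t x0 x).2 ⟨x1, hs, ht⟩, ?_⟩
    simp [proj_append, hps, hpt]
  · intro hx
    exact ⟨x, hx, [], by simp [dStr], rfl⟩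

lemma main (δ : X → E → Set X) (Eo : Set E) (X0 : Set X) (w : List E) :
    fobs δ Eo (UR δ Eo X0) w =
      {x | ∃ x0 ∈ X0, ∃ s, proj Eo s = w ∧ x ∈ dStr δ x0 s} := by
  rw [key δ Eo _ (UR_UR δ Eo X0) w]
  ext x
  constructor
  · rintro ⟨x', ⟨x0, hx0, t, ht, hpt⟩, s, hps, hs⟩
    refine ⟨x0, hx0, t ++ s, ?_, (mem_dStr_append δ t s x0 x).2 ⟨x', ht, hs⟩⟩
    rw [proj_append, hpt, hps]; rfl
  · rintro ⟨x0, hx0, s, hps, hs⟩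
    exact ⟨x0, ⟨x0, hx0, [], by simp [dStr], rfl⟩, s, hps, hs⟩

end ObsAux

/-- For every observation sequence `w`, the observer transition
`f_obs(x_obs,0, w)` is defined (i.e., nonempty) iff some string of the NFA with
projection `w` is defined from some initial state, and in that case the reached
observer state is exactly the current-state estimate of the NFA after observing `w`. -/
theorem observer_state_is_current_state_estimate
    {X E : Type*} [Finite X] [Finite E]
    (δ : X → E → Set X) (Eo : Set E) (X0 : Set X) (w : List E) :
    ((fobs δ Eo (UR δ Eo X0) w).Nonempty ↔
      ∃ x0 ∈ X0, ∃ s : List E, proj Eo s = w ∧ (dStr δ x0 s).Nonempty) ∧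
    ((fobs δ Eo (UR δ Eo X0) w).Nonempty →
      fobs δ Eo (UR δ Eo X0) w =
        {x | ∃ x0 ∈ X0, ∃ s : List E, proj Eo s = w ∧ x ∈ dStr δ x0 s}) := by
  rw [ObsAux.main δ Eo X0 w]
  refine ⟨?_, fun _ => rfl⟩
  constructor
  · rintro ⟨x, x0, hx0, s, hps, hs⟩
    exact ⟨x0, hx0, s, hps, x, hs⟩
  · rintro ⟨x0, hx0, s, hps, x, hs⟩
    exact ⟨x, x0, hx0, s, hps, hs⟩
end
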